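/- arXiv:2004.05613 — 10 statements merged into one kernel-verified Lean document; each statement's English description precedes it below -/
import Mathlib

section
/- Let T : ℂ^{n×n} → ℂ^{k×k} be a linear map that sends positive semidefinite matrices to positive semidefinite matrices. Then for any two positive definite matrices X, Y ∈ ℂ^{n×n} and any matrix A ∈ ℂ^{n×n}, one has ker(T(X)) = ker(T(Y)) ⊆ ker(T(A)). -/
/-!
If `b` is strictly positive, every self-adjoint `a` satisfies `a ≤ c • b` for some real `c`
(compare both with scalars: `a ≤ ‖a‖` and `r ≤ b` for some `r > 0`). For a positive map `T`
and `ψ ∈ ker (T b)`, positivity of `T (c • b - a)` then forces `⟨ψ, T a ψ⟩ ≤ 0`, so `T a ψ = 0`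
whenever `a ≥ 0`. Since the positive elements span the whole algebra, `ψ ∈ ker (T a)` for all `a`.
-/

open Matrix
open scoped ComplexOrder

theorem IsSelfAdjoint.exists_le_smul_of_isStrictlyPositive {A : Type*} [CStarAlgebra A]
    [PartialOrder A] [StarOrderedRing A] {a b : A} (ha : IsSelfAdjoint a)
    (hb : IsStrictlyPositive b) : ∃ c : ℝ, a ≤ c • b := by
  nontriviality A
  obtain ⟨r, hr, hrb⟩ := (CFC.exists_pos_algebraMap_le_iff hb.isSelfAdjoint).2
    fun x hx ↦ hb.spectrum_pos hx
  refine ⟨‖a‖ / r, ?_⟩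
  calc a ≤ algebraMap ℝ A ‖a‖ := ha.le_algebraMap_norm_self
    _ = (‖a‖ / r) • algebraMap ℝ A r := by
      rw [Algebra.algebraMap_eq_smul_one, Algebra.algebraMap_eq_smul_one, smul_smul,
        div_mul_cancel₀ _ hr.ne']
    _ ≤ (‖a‖ / r) • b := by gcongr

theorem Matrix.PosSemidef.mulVec_eq_zero_of_sub_posSemidef {p 𝕜 : Type*} [Fintype p] [RCLike 𝕜]
    {P Q : Matrix p p 𝕜} (hP : P.PosSemidef) (hQP : (Q - P).PosSemidef) {ψ : p → 𝕜}
    (hψ : Q *ᵥ ψ = 0) : P *ᵥ ψ = 0 := by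
  have h := hQP.dotProduct_mulVec_nonneg ψ
  rw [sub_mulVec, hψ, zero_sub, dotProduct_neg, neg_nonneg] at h
  exact (hP.dotProduct_mulVec_zero_iff ψ).mp (le_antisymm h (hP.dotProduct_mulVec_nonneg ψ))

theorem ker_mulVecLin_le_of_isStrictlyPositive {A p : Type*} [CStarAlgebra A] [PartialOrder A]
    [StarOrderedRing A] [Fintype p] (T : A →ₗ[ℂ] Matrix p p ℂ)
    (hT : ∀ a, 0 ≤ a → (T a).PosSemidef) {b : A} (hb : IsStrictlyPositive b) (a : A) :
    LinearMap.ker (T b).mulVecLin ≤ LinearMap.ker (T a).mulVecLin := by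
  intro ψ hψ
  rw [LinearMap.mem_ker, mulVecLin_apply] at hψ ⊢
  have hnonneg : ∀ a, 0 ≤ a → T a *ᵥ ψ = 0 := fun a ha ↦ by
    obtain ⟨c, hc⟩ := ha.isSelfAdjoint.exists_le_smul_of_isStrictlyPositive hb
    refine (hT a ha).mulVec_eq_zero_of_sub_posSemidef (Q := T (c • b)) ?_ ?_
    · simpa [map_sub] using hT _ (sub_nonneg.mpr hc)
    · rw [LinearMap.map_smul_of_tower, smul_mulVec, hψ, smul_zero]
  have hspan : a ∈ Submodule.span ℂ {a : A | 0 ≤ a} := by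
    rw [CStarAlgebra.span_nonneg]; trivial
  induction hspan using Submodule.span_induction with
  | mem a ha => exact hnonneg a ha
  | zero => simp
  | add a a' _ _ h h' => rw [map_add, add_mulVec, h, h', add_zero]
  | smul z a _ h => rw [map_smul, smul_mulVec, h, smul_zero]

theorem Matrix.ker_mulVecLin_map_le_of_posDef {m p : Type*} [Fintype m] [DecidableEq m]
    [Fintype p] (T : Matrix m m ℂ →ₗ[ℂ] Matrix p p ℂ)
    (hT : ∀ A : Matrix m m ℂ, A.PosSemidef → (T A).PosSemidef) {Z : Matrix m m ℂ}
    (hZ : Z.PosDef) (B : Matrix m m ℂ) :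
    LinearMap.ker (T Z).mulVecLin ≤ LinearMap.ker (T B).mulVecLin :=
  open MatrixOrder Matrix.Norms.L2Operator in
  ker_mulVecLin_le_of_isStrictlyPositive T (fun A hA ↦ hT A hA.posSemidef)
    hZ.isStrictlyPositive B

/-- For a positive linear map `T` on complex matrices, the kernel of `T X` is the same
for every positive definite `X`, and is contained in the kernel of `T A` for any `A`. -/
theorem kernel_of_positive_map_eq
    {n k : ℕ} (T : Matrix (Fin n) (Fin n) ℂ →ₗ[ℂ] Matrix (Fin k) (Fin k) ℂ)
    (hT : ∀ A : Matrix (Fin n) (Fin n) ℂ, A.PosSemidef → (T A).PosSemidef)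
    (X Y A : Matrix (Fin n) (Fin n) ℂ) (hX : X.PosDef) (hY : Y.PosDef) :
    LinearMap.ker (T X).mulVecLin = LinearMap.ker (T Y).mulVecLin ∧
      LinearMap.ker (T X).mulVecLin ≤ LinearMap.ker (T A).mulVecLin :=
  ⟨le_antisymm (ker_mulVecLin_map_le_of_posDef T hT hX Y)
    (ker_mulVecLin_map_le_of_posDef T hT hY X), ker_mulVecLin_map_le_of_posDef T hT hX A⟩
end

section
/- Let T : ℂ^{n×n} → ℂ^{k×k} be completely positive with Kraus decomposition T(A) = Σᵢ Kᵢ* A Kᵢ. Then T is strictly positive if and only if the intersection of the kernels of the Kraus operators Kᵢ is {0}. -/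
open Matrix
open scoped ComplexOrder

/-! For `v ≠ 0`, `star v ⬝ᵥ (T X *ᵥ v) = ∑ i, star (K i *ᵥ v) ⬝ᵥ (X *ᵥ (K i *ᵥ v))` is a sum of
nonnegative terms, positive exactly when some `K i *ᵥ v ≠ 0`. Hence `T X` is positive definite
for positive definite `X` when the kernels meet trivially; conversely a common kernel vector
makes the form of `T 1` vanish. -/

namespace Matrix

variable {ι m n R : Type*} [Fintype n]

theorem iInf_ker_mulVecLin_eq_bot_iff [CommSemiring R] (K : ι → Matrix m n R) :
    (⨅ i, LinearMap.ker (K i).mulVecLin) = ⊥ ↔ ∀ v : n → R, (∀ i, K i *ᵥ v = 0) → v = 0 := by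
  simp only [Submodule.eq_bot_iff, Submodule.mem_iInf, LinearMap.mem_ker, mulVecLin_apply]

variable [Fintype ι] [Fintype m]

theorem star_dotProduct_sum_conjTranspose_mul_mul_mulVec [CommRing R] [StarRing R]
    (K : ι → Matrix m n R) (X : Matrix m m R) (v : n → R) :
    star v ⬝ᵥ ((∑ i, (K i)ᴴ * X * K i) *ᵥ v) = ∑ i, star (K i *ᵥ v) ⬝ᵥ (X *ᵥ (K i *ᵥ v)) := by
  simp only [sum_mulVec, dotProduct_sum, ← mulVec_mulVec, dotProduct_mulVec, star_mulVec]

variable [CommRing R] [PartialOrder R] [StarRing R]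

theorem iInf_ker_mulVecLin_eq_bot_of_posDef_sum {K : ι → Matrix m n R} {X : Matrix m m R}
    (h : (∑ i, (K i)ᴴ * X * K i).PosDef) : (⨅ i, LinearMap.ker (K i).mulVecLin) = ⊥ := by
  refine (iInf_ker_mulVecLin_eq_bot_iff K).2 fun v hK => ?_
  by_contra hv
  have := h.dotProduct_mulVec_pos hv
  simp [star_dotProduct_sum_conjTranspose_mul_mul_mulVec, hK] at this

theorem PosDef.sum_conjTranspose_mul_mul_same [IsOrderedAddMonoid R] {K : ι → Matrix m n R}
    {X : Matrix m m R} (hX : X.PosDef) (hK : (⨅ i, LinearMap.ker (K i).mulVecLin) = ⊥) :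
    (∑ i, (K i)ᴴ * X * K i).PosDef := by
  refine .of_dotProduct_mulVec_pos (isSelfAdjoint_sum _ fun i _ =>
    isHermitian_conjTranspose_mul_mul (K i) hX.isHermitian) fun v hv => ?_
  obtain ⟨i, hi⟩ : ∃ i, K i *ᵥ v ≠ 0 :=
    not_forall.1 (mt ((iInf_ker_mulVecLin_eq_bot_iff K).1 hK v) hv)
  rw [star_dotProduct_sum_conjTranspose_mul_mul_mulVec]
  exact Finset.sum_pos' (fun j _ => hX.posSemidef.dotProduct_mulVec_nonneg _)
    ⟨i, Finset.mem_univ i, hX.dotProduct_mulVec_pos hi⟩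

end Matrix

/-- A completely positive map given by a Kraus decomposition `T A = ∑ i, (K i)ᴴ * A * K i`
is strictly positive iff the kernels of the Kraus operators intersect trivially. -/
theorem strictly_positive_iff_kraus_kernels
    {n k : ℕ} {ι : Type*} [Fintype ι]
    (T : Matrix (Fin n) (Fin n) ℂ →ₗ[ℂ] Matrix (Fin k) (Fin k) ℂ)
    (K : ι → Matrix (Fin n) (Fin k) ℂ)
    (hKraus : ∀ A : Matrix (Fin n) (Fin n) ℂ, T A = ∑ i, (K i)ᴴ * A * K i) :
    (∀ X : Matrix (Fin n) (Fin n) ℂ, X.PosDef → (T X).PosDef) ↔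
      (⨅ i, LinearMap.ker (K i).mulVecLin) = ⊥ := by
  simp only [hKraus]
  exact ⟨fun h => iInf_ker_mulVecLin_eq_bot_of_posDef_sum (h 1 .one),
    fun hK _ hX => hX.sum_conjTranspose_mul_mul_same hK⟩
end

section
/- If a linear map T : ℂ^{n×n} → ℂ^{k×k} is both completely positive and strictly positive, then T ⊗ id_m is strictly positive for every m ∈ ℕ (i.e. T is completely strictly positive). -/
open Matrix
open scoped ComplexOrder

/-- The map `T ⊗ id_m` acting on `ℂ^{nm × nm} ≅ ℂ^{n×n} ⊗ ℂ^{m×m}`, in block form: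
`((T ⊗ id_m) A)_{(i,a),(j,b)} = T(A^{ab})_{i,j}` where `A^{ab}_{ij} = A_{(i,a),(j,b)}`. -/
noncomputable def tensorId {n k : ℕ}
    (T : Matrix (Fin n) (Fin n) ℂ →ₗ[ℂ] Matrix (Fin k) (Fin k) ℂ) (m : ℕ)
    (A : Matrix (Fin n × Fin m) (Fin n × Fin m) ℂ) :
    Matrix (Fin k × Fin m) (Fin k × Fin m) ℂ :=
  Matrix.of fun p q => T (Matrix.of fun i j => A (i, p.2) (j, q.2)) p.1 q.1

/-!
A positive definite `A` dominates `c • 1` for some `c > 0`, and `(T ⊗ id_m)(c • 1) = c • (T 1 ⊗ 1)`.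
Hence `(T ⊗ id_m) A` is the sum of `(T ⊗ id_m)(A - c • 1)`, positive semidefinite by complete
positivity, and `c • (T 1 ⊗ 1)`, positive definite because `T 1` is.
-/

open scoped Kronecker

open scoped MatrixOrder in
lemma Matrix.PosDef.exists_pos_posSemidef_sub_smul_one {𝕜 ι : Type*} [RCLike 𝕜] [Fintype ι]
    [DecidableEq ι] {A : Matrix ι ι 𝕜} (hA : A.PosDef) :
    ∃ c : ℝ, 0 < c ∧ (A - c • (1 : Matrix ι ι 𝕜)).PosSemidef := by
  cases isEmpty_or_nonempty ι
  · exact ⟨1, one_pos, Subsingleton.elim 0 (A - _) ▸ .zero⟩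
  obtain ⟨c, hc, hcA⟩ := (CFC.exists_pos_algebraMap_le_iff hA.isHermitian.isSelfAdjoint).mpr
    fun x hx => hA.isStrictlyPositive.spectrum_pos hx
  exact ⟨c, hc, by simpa [Algebra.algebraMap_eq_smul_one] using le_iff.mp hcA⟩

section tensorId

variable {n k : ℕ} (T : Matrix (Fin n) (Fin n) ℂ →ₗ[ℂ] Matrix (Fin k) (Fin k) ℂ) (m : ℕ)

lemma tensorId_add (A B : Matrix (Fin n × Fin m) (Fin n × Fin m) ℂ) :
    tensorId T m (A + B) = tensorId T m A + tensorId T m B := by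
  ext p q
  exact congrFun₂ (map_add T _ _) p.1 q.1

lemma tensorId_smul {R : Type*} [Semiring R] [Module R ℂ] [IsScalarTower R ℂ ℂ] (c : R)
    (A : Matrix (Fin n × Fin m) (Fin n × Fin m) ℂ) :
    tensorId T m (c • A) = c • tensorId T m A := by
  ext p q
  exact congrFun₂ (LinearMap.map_smul_of_tower T c _) p.1 q.1

lemma tensorId_one : tensorId T m 1 = T 1 ⊗ₖ 1 := by
  ext ⟨i, a⟩ ⟨j, b⟩
  have hblock : (of fun i' j' => (1 : Matrix (Fin n × Fin m) (Fin n × Fin m) ℂ) (i', a) (j', b))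
      = (1 : Matrix (Fin m) (Fin m) ℂ) a b • 1 := by
    ext i' j'
    by_cases h : a = b <;> simp [one_apply, h]
  simp only [tensorId, of_apply, hblock, map_smul, kroneckerMap_apply, Matrix.smul_apply,
    smul_eq_mul]
  exact mul_comm _ _

end tensorId

/-- If a linear map is completely positive and strictly positive, then it is
completely strictly positive: `T ⊗ id_m` is strictly positive for every `m`. -/
theorem completely_strictly_positive_of_cp_sp
    {n k : ℕ} (T : Matrix (Fin n) (Fin n) ℂ →ₗ[ℂ] Matrix (Fin k) (Fin k) ℂ)
    (hCP : ∀ (m : ℕ) (A : Matrix (Fin n × Fin m) (Fin n × Fin m) ℂ),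
      A.PosSemidef → (tensorId T m A).PosSemidef)
    (hSP : ∀ X : Matrix (Fin n) (Fin n) ℂ, X.PosDef → (T X).PosDef) :
    ∀ (m : ℕ) (A : Matrix (Fin n × Fin m) (Fin n × Fin m) ℂ),
      A.PosDef → (tensorId T m A).PosDef := by
  intro m A hA
  obtain ⟨c, hc, hAc⟩ := hA.exists_pos_posSemidef_sub_smul_one
  have hsplit : tensorId T m A = tensorId T m (A - c • 1) + c • (T 1 ⊗ₖ 1) := by
    rw [← tensorId_one, ← tensorId_smul, ← tensorId_add, sub_add_cancel]
  rw [hsplit]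
  exact PosDef.posSemidef_add (hCP m _ hAc) (((hSP 1 .one).kronecker .one).smul hc)
end

section
/- Let T : ℂ^{n×n} → ℂ^{k×k} be linear and positive but not strictly positive, and let m = dim ker(T(𝟙)) ≥ 1. Then there exists an orthogonal projection π ∈ ℂ^{k×k} of rank k − m such that π T(A) π = T(A) for all A ∈ ℂ^{n×n}. -/
/-!
Let `H = T 1`, which is positive semidefinite, and let `π` be the orthogonal projection onto its
range, so `rank π = rank H = k - m`. Every positive `A` satisfies `A ≤ ‖A‖ • 1`, hence
`0 ≤ T A ≤ ‖A‖ • H`, which forces `T A` to vanish on `ker H = range (1 - π)`; being Hermitian,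
`T A` is then compressed by `π`. Since positive matrices span all matrices, `π * T A * π = T A`
for every `A`. Finally `m ≥ 1`, for if `H` were invertible then `X ≥ r • 1` with `r > 0` would give
`T X ≥ r • H > 0` for every positive definite `X`.
-/

open Matrix
open scoped ComplexOrder MatrixOrder Matrix.Norms.L2Operator

theorem IsStarProjection.conjugate_of_mul_one_sub_eq_zero {R : Type*} [Ring R] [StarRing R]
    {p a : R} (hp : IsStarProjection p) (ha : IsSelfAdjoint a) (h : a * (1 - p) = 0) :
    p * a * p = a := by
  have hap : a * p = a := by rwa [mul_sub, mul_one, sub_eq_zero, eq_comm] at h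
  have hpa : p * a = a := by
    simpa [hp.isSelfAdjoint.star_eq, ha.star_eq] using congr(star $hap)
  rw [hpa, hap]

section CStarAlgebra

variable {A B : Type*} [CStarAlgebra A] [PartialOrder A] [StarOrderedRing A]
  [CStarAlgebra B] [PartialOrder B] [StarOrderedRing B]

theorem mul_eq_zero_of_nonneg_of_le_of_mul_eq_zero {a b q : B} (ha : 0 ≤ a) (hab : a ≤ b)
    (hbq : b * q = 0) : a * q = 0 := by
  have hconj : star q * a * q = 0 := by
    refine le_antisymm ?_ (star_left_conjugate_nonneg ha q)
    simpa [mul_assoc, hbq] using star_left_conjugate_le_conjugate hab q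
  obtain ⟨s, rfl⟩ := CStarAlgebra.nonneg_iff_eq_star_mul_self.mp ha
  have hsq : s * q = 0 := by
    rw [← CStarRing.star_mul_self_eq_zero_iff, star_mul, ← hconj]
    noncomm_ring
  rw [mul_assoc, hsq, mul_zero]

theorem map_le_norm_smul_map_one {T : A →ₗ[ℂ] B} (hT : ∀ a, 0 ≤ a → 0 ≤ T a) {a : A}
    (ha : 0 ≤ a) : T a ≤ ‖a‖ • T 1 := by
  have h := hT _ (sub_nonneg.mpr (IsSelfAdjoint.of_nonneg ha).le_algebraMap_norm_self)
  rwa [map_sub, Algebra.algebraMap_eq_smul_one, LinearMap.map_smul_of_tower, sub_nonneg] at h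

theorem IsStarProjection.conjugate_map_of_map_one_mul_one_sub_eq_zero {p : B}
    (hp : IsStarProjection p) {T : A →ₗ[ℂ] B} (hT : ∀ a, 0 ≤ a → 0 ≤ T a)
    (h : T 1 * (1 - p) = 0) (a : A) : p * T a * p = T a := by
  have hnonneg : ∀ a, 0 ≤ a → p * T a * p = T a := fun a ha =>
    hp.conjugate_of_mul_one_sub_eq_zero (.of_nonneg (hT a ha))
      (mul_eq_zero_of_nonneg_of_le_of_mul_eq_zero (hT a ha) (map_le_norm_smul_map_one hT ha)
        (by rw [smul_mul_assoc, h, smul_zero]))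
  have ha : a ∈ Submodule.span ℂ {a : A | 0 ≤ a} := CStarAlgebra.span_nonneg (A := A) ▸ trivial
  induction ha using Submodule.span_induction with
  | mem x hx => exact hnonneg x hx
  | zero => simp
  | add x y _ _ hx hy => rw [map_add, mul_add, add_mul, hx, hy]
  | smul c x _ hx => rw [map_smul, mul_smul_comm, smul_mul_assoc, hx]

theorem IsStrictlyPositive.map_of_isStrictlyPositive_map_one {T : A →ₗ[ℂ] B}
    (hT : ∀ a, 0 ≤ a → 0 ≤ T a) {a : A} (ha : IsStrictlyPositive a)
    (h1 : IsStrictlyPositive (T 1)) : IsStrictlyPositive (T a) := by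
  rcases subsingleton_or_nontrivial A with hA | hA
  · rwa [Subsingleton.elim a 1]
  obtain ⟨r, hr, hra⟩ := (CFC.exists_pos_algebraMap_le_iff ha.isSelfAdjoint).mpr
    fun x hx => ha.spectrum_pos hx
  have h := hT _ (sub_nonneg.mpr hra)
  rw [map_sub, Algebra.algebraMap_eq_smul_one, LinearMap.map_smul_of_tower, sub_nonneg] at h
  exact (h1.smul hr).of_le h

end CStarAlgebra

namespace Matrix

variable {n 𝕜 : Type*} [Fintype n] [RCLike 𝕜] {H : Matrix n n 𝕜}

theorem rank_add_finrank_ker_mulVecLin (H : Matrix n n 𝕜) :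
    H.rank + Module.finrank 𝕜 (LinearMap.ker H.mulVecLin) = Fintype.card n := by
  rw [rank, LinearMap.finrank_range_add_finrank_ker, Module.finrank_fintype_fun_eq_card]

variable [DecidableEq n]

theorem PosSemidef.posDef_of_ker_eq_bot (hH : H.PosSemidef)
    (hker : LinearMap.ker H.mulVecLin = ⊥) : H.PosDef :=
  hH.posDef_iff_isUnit.mpr (mulVec_injective_iff_isUnit.mp (LinearMap.ker_eq_bot.mp hker))

namespace IsHermitian

noncomputable def supportProjection (hH : H.IsHermitian) : Matrix n n 𝕜 :=
  Unitary.conjStarAlgAut 𝕜 _ hH.eigenvectorUnitary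
    (diagonal fun i => if hH.eigenvalues i = 0 then 0 else 1)

theorem isStarProjection_supportProjection (hH : H.IsHermitian) :
    IsStarProjection hH.supportProjection := by
  refine IsStarProjection.map ⟨?_, ?_⟩ _
  · rw [IsIdempotentElem, diagonal_mul_diagonal]
    congr 1 with i
    split_ifs <;> simp
  · rw [IsSelfAdjoint, star_eq_conjTranspose, diagonal_conjTranspose]
    congr 1 with i
    split_ifs <;> simp_all

theorem mul_one_sub_supportProjection (hH : H.IsHermitian) :
    H * (1 - hH.supportProjection) = 0 := by
  conv_lhs => arg 1; rw [hH.spectral_theorem]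
  rw [supportProjection, ← map_one (Unitary.conjStarAlgAut 𝕜 _ hH.eigenvectorUnitary), ← map_sub,
    ← map_mul, EmbeddingLike.map_eq_zero_iff, ← diagonal_one, diagonal_sub,
    diagonal_mul_diagonal, diagonal_eq_zero]
  funext i
  by_cases h : hH.eigenvalues i = 0 <;> simp [h]

theorem rank_supportProjection (hH : H.IsHermitian) : hH.supportProjection.rank = H.rank := by
  rw [hH.rank_eq_card_non_zero_eigs, supportProjection, Unitary.conjStarAlgAut_apply,
    ← Unitary.coe_star]
  simp [-isUnit_iff_ne_zero, -Unitary.coe_star, rank_diagonal]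

end IsHermitian

end Matrix

/-- If `T` is positive but not strictly positive, and `m = dim ker (T 1) ≥ 1`, then there is
an orthogonal projection `π` of rank `k - m` with `π * T A * π = T A` for every `A`. -/
theorem exists_projection_of_not_strictly_positive
    {n k : ℕ} (T : Matrix (Fin n) (Fin n) ℂ →ₗ[ℂ] Matrix (Fin k) (Fin k) ℂ)
    (hT : ∀ A : Matrix (Fin n) (Fin n) ℂ, A.PosSemidef → (T A).PosSemidef)
    (hnsp : ¬ (∀ X : Matrix (Fin n) (Fin n) ℂ, X.PosDef → (T X).PosDef))
    (m : ℕ) (hm : m = Module.finrank ℂ (LinearMap.ker (T 1).mulVecLin)) :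
    1 ≤ m ∧ ∃ π : Matrix (Fin k) (Fin k) ℂ, π.IsHermitian ∧ π * π = π ∧
      π.rank = k - m ∧ ∀ A : Matrix (Fin n) (Fin n) ℂ, π * T A * π = T A := by
  have hpos : ∀ A, 0 ≤ A → 0 ≤ T A := fun A hA => (hT A hA.posSemidef).nonneg
  have hH : (T 1).PosSemidef := hT 1 PosSemidef.one
  have hrank : (T 1).rank + m = k := by
    rw [hm, rank_add_finrank_ker_mulVecLin, Fintype.card_fin]
  have hm1 : 1 ≤ m := by
    by_contra! hm0
    have hker : LinearMap.ker (T 1).mulVecLin = ⊥ := Submodule.finrank_eq_zero.mp (by omega)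
    refine hnsp fun X hX => IsStrictlyPositive.posDef ?_
    exact hX.isStrictlyPositive.map_of_isStrictlyPositive_map_one hpos
      (hH.posDef_of_ker_eq_bot hker).isStrictlyPositive
  have hπ := hH.isHermitian.isStarProjection_supportProjection
  refine ⟨hm1, _, hπ.isSelfAdjoint, hπ.isIdempotentElem, ?_,
    hπ.conjugate_map_of_map_one_mul_one_sub_eq_zero hpos
      hH.isHermitian.mul_one_sub_supportProjection⟩
  rw [hH.isHermitian.rank_supportProjection]
  omega
end

section
/- Let T : ℂ^{n×n} → ℂ^{2×2} be a positive trace-preserving linear map which is not strictly positive. Then there exists a unit vector ψ ∈ ℂ² such that T(A) = tr(A) |ψ⟩⟨ψ| for all A ∈ ℂ^{n×n}. -/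
/-!
Let `X > 0` with `T X` singular, and pick `v ≠ 0` with `T X v = 0`. Every positive semidefinite
`B` satisfies `B ≤ c X` for some `c`, so `0 ≤ v* T(B) v ≤ c v* T(X) v = 0`, whence `T(B) v = 0`
and `v* T(B) = 0`. Positive semidefinite matrices span all matrices, so `T(A) v = 0` and
`v* T(A) = 0` for every `A`. In dimension two this pins `T(A)` down to a multiple of `|ψ⟩⟨ψ|`,
with `ψ` the unit vector orthogonal to `v`, and trace preservation fixes the multiple.
-/

open Matrix
open scoped ComplexOrder ComplexConjugate

lemma IsStrictlyPositive.exists_le_smul {A : Type*} [CStarAlgebra A] [PartialOrder A]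
    [StarOrderedRing A] {a b : A} (ha : IsStrictlyPositive a) (hb : IsSelfAdjoint b) :
    ∃ c : ℝ, b ≤ c • a := by
  nontriviality A
  obtain ⟨r, hr, hra⟩ := (CFC.exists_pos_algebraMap_le_iff ha.isSelfAdjoint).2
    fun x hx ↦ ha.spectrum_pos hx
  refine ⟨‖b‖ / r, hb.le_algebraMap_norm_self.trans ?_⟩
  calc algebraMap ℝ A ‖b‖ = (‖b‖ / r) • algebraMap ℝ A r := by
        rw [Algebra.smul_def, ← map_mul, div_mul_cancel₀ _ hr.ne']
    _ ≤ (‖b‖ / r) • a := smul_le_smul_of_nonneg_left hra (by positivity)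

namespace Matrix

section PositiveMap

variable {m k : Type*} [Fintype m] [DecidableEq m] [Fintype k]

open scoped MatrixOrder Matrix.Norms.L2Operator in
lemma PosDef.exists_posSemidef_smul_sub {X B : Matrix m m ℂ} (hX : X.PosDef)
    (hB : B.IsHermitian) : ∃ c : ℝ, (c • X - B).PosSemidef :=
  hX.isStrictlyPositive.exists_le_smul hB

open scoped MatrixOrder in
lemma induction_on_posSemidef {p : Matrix m m ℂ → Prop} (A : Matrix m m ℂ)
    (posSemidef : ∀ B : Matrix m m ℂ, B.PosSemidef → p B)
    (add : ∀ B C, p B → p C → p (B + C)) (smul : ∀ (c : ℂ) B, p B → p (c • B)) : p A := by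
  have hA : A ∈ Submodule.span ℂ {B : Matrix m m ℂ | 0 ≤ B} := by
    rw [CStarAlgebra.span_nonneg]; trivial
  induction hA using Submodule.span_induction with
  | mem B hB => exact posSemidef B hB.posSemidef
  | zero => simpa using smul 0 0 (posSemidef 0 .zero)
  | add B C _ _ hB hC => exact add B C hB hC
  | smul c B _ hB => exact smul c B hB

lemma mulVec_eq_zero_of_mulVec_posDef_eq_zero {T : Matrix m m ℂ →ₗ[ℂ] Matrix k k ℂ}
    (hT : ∀ A, A.PosSemidef → (T A).PosSemidef) {X : Matrix m m ℂ} (hX : X.PosDef)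
    {v : k → ℂ} (hXv : T X *ᵥ v = 0) {B : Matrix m m ℂ} (hB : B.PosSemidef) :
    T B *ᵥ v = 0 := by
  obtain ⟨c, hc⟩ := hX.exists_posSemidef_smul_sub hB.isHermitian
  have hle : star v ⬝ᵥ T B *ᵥ v ≤ 0 := by
    simpa [LinearMap.map_smul_of_tower, sub_mulVec, smul_mulVec, hXv] using
      (hT _ hc).dotProduct_mulVec_nonneg v
  exact ((hT B hB).dotProduct_mulVec_zero_iff v).1 <|
    le_antisymm hle ((hT B hB).dotProduct_mulVec_nonneg v)

theorem mulVec_eq_zero_and_vecMul_eq_zero_of_mulVec_posDef_eq_zero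
    {T : Matrix m m ℂ →ₗ[ℂ] Matrix k k ℂ} (hT : ∀ A, A.PosSemidef → (T A).PosSemidef)
    {X : Matrix m m ℂ} (hX : X.PosDef) {v : k → ℂ} (hXv : T X *ᵥ v = 0) (A : Matrix m m ℂ) :
    T A *ᵥ v = 0 ∧ star v ᵥ* T A = 0 := by
  induction A using induction_on_posSemidef with
  | posSemidef B hB =>
    have hBv := mulVec_eq_zero_of_mulVec_posDef_eq_zero hT hX hXv hB
    refine ⟨hBv, ?_⟩
    rw [← (hT B hB).isHermitian.eq, ← star_mulVec, hBv, star_zero]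
  | add B C hB hC => simp [add_mulVec, vecMul_add, hB, hC]
  | smul c B hB => simp [smul_mulVec, vecMul_smul, hB]

end PositiveMap

lemma exists_dotProduct_eq_one_and_smul_vecMulVec {n : Type*} [Fintype n] {u : n → ℂ}
    (hu : u ≠ 0) : ∃ ψ : n → ℂ, star ψ ⬝ᵥ ψ = 1 ∧
      (star u ⬝ᵥ u) • vecMulVec ψ (star ψ) = vecMulVec u (star u) := by
  obtain ⟨s, hs, hsu⟩ : ∃ s > (0 : ℝ), (s : ℂ) = star u ⬝ᵥ u :=
    RCLike.pos_iff_exists_ofReal.1 (dotProduct_star_self_pos_iff.2 hu)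
  have hr : ((√s : ℝ) : ℂ) ≠ 0 := by exact_mod_cast (Real.sqrt_pos.2 hs).ne'
  have hrr : ((√s : ℝ) : ℂ) * (√s : ℝ) = star u ⬝ᵥ u := by
    rw [← hsu, ← Complex.ofReal_mul, Real.mul_self_sqrt hs.le]
  refine ⟨((√s : ℝ) : ℂ)⁻¹ • u, ?_, ?_⟩
  · simp only [star_smul, star_inv₀, RCLike.star_def, Complex.conj_ofReal, dotProduct_smul,
      smul_dotProduct, ← hrr, smul_eq_mul]
    field_simp
  · simp only [star_smul, star_inv₀, RCLike.star_def, Complex.conj_ofReal, vecMulVec_smul,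
      smul_vecMulVec, smul_smul, ← hrr]
    rw [mul_mul_mul_comm, mul_inv_cancel₀ hr, one_mul, one_smul]

def perp (v : Fin 2 → ℂ) : Fin 2 → ℂ := ![-conj (v 1), conj (v 0)]

lemma star_perp_dotProduct_perp (v : Fin 2 → ℂ) :
    star (perp v) ⬝ᵥ perp v = star v ⬝ᵥ v := by
  simp only [perp, dotProduct, Fin.sum_univ_two, Pi.star_apply, RCLike.star_def, cons_val_zero,
    cons_val_one, map_neg, Complex.conj_conj]
  ring

lemma perp_ne_zero {v : Fin 2 → ℂ} (hv : v ≠ 0) : perp v ≠ 0 := by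
  rw [ne_eq, ← dotProduct_star_self_eq_zero, star_perp_dotProduct_perp]
  exact dotProduct_star_self_eq_zero.not.2 hv

/-- `M v = 0` makes the rows of `M` multiples of `(perp v)*`, and `v* M = 0` makes its columns
multiples of `perp v`. -/
lemma dotProduct_star_self_smul_eq_trace_smul_vecMulVec_perp {M : Matrix (Fin 2) (Fin 2) ℂ}
    {v : Fin 2 → ℂ} (hMv : M *ᵥ v = 0) (hvM : star v ᵥ* M = 0) :
    (star v ⬝ᵥ v) • M = M.trace • vecMulVec (perp v) (star (perp v)) := by
  have h0 := congrFun hMv 0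
  have h1 := congrFun hMv 1
  have g0 := congrFun hvM 0
  have g1 := congrFun hvM 1
  simp only [mulVec, vecMul, dotProduct, Fin.sum_univ_two, Pi.star_apply, RCLike.star_def,
    Pi.zero_apply] at h0 h1 g0 g1
  rw [← Matrix.ext_iff]
  simp only [Fin.forall_fin_two, smul_apply, vecMulVec_apply, perp, dotProduct, Fin.sum_univ_two,
    Pi.star_apply, RCLike.star_def, trace_fin_two, smul_eq_mul, cons_val_zero, cons_val_one,
    map_neg, Complex.conj_conj]
  refine ⟨⟨?_, ?_⟩, ?_, ?_⟩
  · linear_combination conj (v 0) * h0 - v 1 * g1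
  · linear_combination v 0 * g1 + conj (v 1) * h0
  · linear_combination conj (v 0) * h1 + v 1 * g0
  · linear_combination v 1 * g1 - conj (v 0) * h0

theorem exists_forall_eq_trace_smul_vecMulVec {v : Fin 2 → ℂ} (hv : v ≠ 0) :
    ∃ ψ : Fin 2 → ℂ, star ψ ⬝ᵥ ψ = 1 ∧ ∀ M : Matrix (Fin 2) (Fin 2) ℂ,
      M *ᵥ v = 0 → star v ᵥ* M = 0 → M = M.trace • vecMulVec ψ (star ψ) := by
  obtain ⟨ψ, hψ, hψψ⟩ := exists_dotProduct_eq_one_and_smul_vecMulVec (perp_ne_zero hv)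
  refine ⟨ψ, hψ, fun M hMv hvM => ?_⟩
  have h := dotProduct_star_self_smul_eq_trace_smul_vecMulVec_perp hMv hvM
  rw [← hψψ, star_perp_dotProduct_perp, smul_comm] at h
  exact smul_right_injective _ (dotProduct_star_self_eq_zero.not.2 hv) h

end Matrix

/-- A positive trace-preserving map into `ℂ^{2×2}` which is not strictly positive is the
trace projection onto a pure state: `T A = tr(A) • |ψ⟩⟨ψ|` for some unit vector `ψ`. -/
theorem qubit_not_strictly_positive_is_trace_projection
    {n : ℕ} (T : Matrix (Fin n) (Fin n) ℂ →ₗ[ℂ] Matrix (Fin 2) (Fin 2) ℂ)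
    (hT : ∀ A : Matrix (Fin n) (Fin n) ℂ, A.PosSemidef → (T A).PosSemidef)
    (htr : ∀ A : Matrix (Fin n) (Fin n) ℂ, (T A).trace = A.trace)
    (hnsp : ¬ (∀ X : Matrix (Fin n) (Fin n) ℂ, X.PosDef → (T X).PosDef)) :
    ∃ ψ : Fin 2 → ℂ, star ψ ⬝ᵥ ψ = 1 ∧
      ∀ A : Matrix (Fin n) (Fin n) ℂ, T A = A.trace • Matrix.vecMulVec ψ (star ψ) := by
  push Not at hnsp
  obtain ⟨X, hX, hTX⟩ := hnsp
  obtain ⟨v, hv, hTXv⟩ : ∃ v ≠ 0, T X *ᵥ v = 0 :=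
    exists_mulVec_eq_zero_iff.2 <| by
      simpa using (hT X hX.posSemidef).posDef_iff_det_ne_zero.not.1 hTX
  obtain ⟨ψ, hψ, hM⟩ := exists_forall_eq_trace_smul_vecMulVec hv
  refine ⟨ψ, hψ, fun A => ?_⟩
  obtain ⟨hAv, hvA⟩ := mulVec_eq_zero_and_vecMul_eq_zero_of_mulVec_posDef_eq_zero hT hX hTXv A
  rw [hM _ hAv hvA, htr]
end

section
/- Let (T_t)_{t≥0} be a one-parameter semigroup of positive trace-preserving linear maps on ℂ^{n×n} which is continuous in t with T₀ = id. Then T_t is strictly positive for every t ≥ 0. -/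
/-!
A positive map `L` with `L 1` positive definite is strictly positive: a positive definite `X`
dominates some `r • 1` with `r > 0`, so `L X ≥ r • L 1`. Since `T 0 1 = 1` and the determinant is
continuous, `T s 1` is positive definite for all small `s ≥ 0`, hence `T s` is strictly positive
there. Strictly positive maps are closed under composition, and every `T t` is a power
`T (t / m) ^ m` with `t / m` small.
-/

open Matrix Filter Topology
open scoped ComplexOrder MatrixOrder

section Semigroup

variable {M : Type*} [Monoid M] {T : ℝ → M}

theorem semigroup_apply_natCast_mul (h0 : T 0 = 1)
    (hsg : ∀ s t : ℝ, 0 ≤ s → 0 ≤ t → T (t + s) = T t * T s) {s : ℝ} (hs : 0 ≤ s) :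
    ∀ k : ℕ, T (k * s) = T s ^ k
  | 0 => by simp [h0]
  | k + 1 => by
    rw [Nat.cast_succ, add_one_mul, hsg s _ hs (by positivity),
      semigroup_apply_natCast_mul h0 hsg hs k, pow_succ]

theorem semigroup_mem_of_forall_Ico_mem {P : Submonoid M} (h0 : T 0 = 1)
    (hsg : ∀ s t : ℝ, 0 ≤ s → 0 ≤ t → T (t + s) = T t * T s) {δ : ℝ} (hδ : 0 < δ)
    (hP : ∀ s, 0 ≤ s → s < δ → T s ∈ P) {t : ℝ} (ht : 0 ≤ t) : T t ∈ P := by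
  obtain ⟨m, hm⟩ := exists_nat_gt (t / δ)
  have hm0 : (0 : ℝ) < m := (div_nonneg ht hδ.le).trans_lt hm
  have hs : t / m < δ := by
    rw [div_lt_iff₀ hm0]
    rwa [div_lt_iff₀ hδ, mul_comm] at hm
  have ht_eq : t = m * (t / m) := by field_simp
  rw [ht_eq, semigroup_apply_natCast_mul h0 hsg (div_nonneg ht hm0.le)]
  exact P.pow_mem (hP _ (div_nonneg ht hm0.le) hs) m

end Semigroup

namespace Matrix

variable {n 𝕜 : Type*} [Fintype n] [DecidableEq n] [RCLike 𝕜]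

variable (n 𝕜) in
def strictlyPositiveMaps : Submonoid (Module.End 𝕜 (Matrix n n 𝕜)) where
  carrier := {L | ∀ X : Matrix n n 𝕜, X.PosDef → (L X).PosDef}
  mul_mem' hL hK X hX := hL _ (hK X hX)
  one_mem' _ hX := hX

theorem PosDef.exists_pos_algebraMap_le {X : Matrix n n 𝕜} (hX : X.PosDef) :
    ∃ r > (0 : ℝ), algebraMap ℝ (Matrix n n 𝕜) r ≤ X := by
  rcases subsingleton_or_nontrivial (Matrix n n 𝕜) with _ | _
  · exact ⟨1, one_pos, (Subsingleton.elim _ _).le⟩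
  exact (CFC.exists_pos_algebraMap_le_iff hX.isHermitian).2
    fun _ hx => hX.isStrictlyPositive.spectrum_pos hx

theorem mem_strictlyPositiveMaps_of_posDef_apply_one (L : Module.End 𝕜 (Matrix n n 𝕜))
    (hL : ∀ A : Matrix n n 𝕜, A.PosSemidef → (L A).PosSemidef) (h1 : (L 1).PosDef) :
    L ∈ strictlyPositiveMaps n 𝕜 := by
  intro X hX
  obtain ⟨r, hr, hrX⟩ := hX.exists_pos_algebraMap_le
  have hLX : L X = L (X - algebraMap ℝ _ r) + r • L 1 := by
    rw [Algebra.algebraMap_eq_smul_one, ← L.map_smul_of_tower, ← map_add, sub_add_cancel]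
  rw [hLX]
  exact .posSemidef_add (hL _ (le_iff.mp hrX)) (h1.smul hr)

theorem eventually_posDef_apply_one {T : ℝ → Module.End 𝕜 (Matrix n n 𝕜)}
    (hpos : ∀ t : ℝ, 0 ≤ t → ∀ A : Matrix n n 𝕜, A.PosSemidef → (T t A).PosSemidef)
    (h0 : T 0 = LinearMap.id) (hcont : ContinuousWithinAt (fun t => T t 1) (Set.Ici 0) 0) :
    ∀ᶠ t in 𝓝[≥] 0, (T t 1).PosDef := by
  have hdet : ∀ᶠ t in 𝓝[≥] 0, (T t 1).det ≠ 0 :=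
    (continuous_id.matrix_det.continuousAt.comp_continuousWithinAt hcont).eventually_ne
      (by simp [h0])
  filter_upwards [hdet, self_mem_nhdsWithin] with t hdet ht
  exact (hpos t ht 1 PosSemidef.one).posDef_iff_det_ne_zero.mpr hdet

end Matrix

theorem semigroup_strictly_positive_general
    {n : ℕ} (T : ℝ → (Matrix (Fin n) (Fin n) ℂ →ₗ[ℂ] Matrix (Fin n) (Fin n) ℂ))
    (hpos : ∀ t : ℝ, 0 ≤ t → ∀ A : Matrix (Fin n) (Fin n) ℂ, A.PosSemidef → ((T t) A).PosSemidef)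
    (hsg : ∀ s t : ℝ, 0 ≤ s → 0 ≤ t → T (t + s) = (T t).comp (T s))
    (h0 : T 0 = LinearMap.id)
    (hcont : ∀ A : Matrix (Fin n) (Fin n) ℂ,
      ContinuousOn (fun t : ℝ => (T t) A) (Set.Ici (0 : ℝ))) :
    ∀ t : ℝ, 0 ≤ t → ∀ X : Matrix (Fin n) (Fin n) ℂ, X.PosDef → ((T t) X).PosDef := by
  obtain ⟨δ, hδ, hsmall⟩ := (nhdsGE_basis_Ico (0 : ℝ)).eventually_iff.mp
    (eventually_posDef_apply_one hpos h0 (hcont 1 0 Set.self_mem_Ici))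
  have hstrict : ∀ s, 0 ≤ s → s < δ → T s ∈ strictlyPositiveMaps (Fin n) ℂ := fun s hs hsδ =>
    mem_strictlyPositiveMaps_of_posDef_apply_one (T s) (hpos s hs) (hsmall ⟨hs, hsδ⟩)
  intro t ht
  exact semigroup_mem_of_forall_Ico_mem h0 hsg hδ hstrict ht

/-- Every one-parameter semigroup `(T_t)_{t ≥ 0}` of positive trace-preserving linear maps on
`ℂ^{n×n}`, continuous in `t` with `T 0 = id`, consists of strictly positive maps. -/
theorem semigroup_strictly_positive
    {n : ℕ} (T : ℝ → (Matrix (Fin n) (Fin n) ℂ →ₗ[ℂ] Matrix (Fin n) (Fin n) ℂ))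
    (hpos : ∀ t : ℝ, 0 ≤ t → ∀ A : Matrix (Fin n) (Fin n) ℂ, A.PosSemidef → ((T t) A).PosSemidef)
    (htr : ∀ t : ℝ, 0 ≤ t → ∀ A : Matrix (Fin n) (Fin n) ℂ, ((T t) A).trace = A.trace)
    (hsg : ∀ s t : ℝ, 0 ≤ s → 0 ≤ t → T (t + s) = (T t).comp (T s))
    (h0 : T 0 = LinearMap.id)
    (hcont : ∀ A : Matrix (Fin n) (Fin n) ℂ,
      ContinuousOn (fun t : ℝ => (T t) A) (Set.Ici (0 : ℝ))) :
    ∀ t : ℝ, 0 ≤ t → ∀ X : Matrix (Fin n) (Fin n) ℂ, X.PosDef → ((T t) X).PosDef :=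
  semigroup_strictly_positive_general T hpos hsg h0 hcont
end

section
/- For Hermitian matrices A, B ∈ ℂ^{n×n}, there exists a linear positive trace-preserving map T : ℂ^{n×n} → ℂ^{n×n} with T(B) = A if and only if tr(A) = tr(B) and ‖A‖₁ ≤ ‖B‖₁. -/
/-!
Let `E` be the spectral projection of a Hermitian `A` onto its nonnegative eigenspaces. Then
`A = EA - (1 - E)(-A)` is a difference of positive semidefinite matrices with
`tr(EA) + tr((1 - E)(-A)) = tr |A| = ‖A‖₁`. For any other such difference `A = P - Q`,
`‖A‖₁ = tr(E(P - Q)) - tr((1 - E)(P - Q)) ≤ tr P + tr Q`, because `tr(FX) = tr(FXF) ≥ 0` for a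
projection `F` and `X ≥ 0`. Hence `‖A‖₁` is the least `tr P + tr Q` over all such differences,
and a positive trace-preserving map cannot increase it.

Conversely, write `A = P - Q` optimally and let `E` be the projection of `B`. Since
`tr A = tr B` and `‖A‖₁ ≤ ‖B‖₁`, the numbers `tr(EB) - tr P` and `tr((1 - E)(-B)) - tr Q` agree
and are a common `c ≥ 0`. Normalising `P + cσ` and `Q + cσ`, for a fixed state `σ`, gives states
`ρ₁, ρ₂`, and the measure-and-prepare map `X ↦ tr(EX) ρ₁ + tr((1 - E)X) ρ₂` sends `B` to `A`.
-/

open Matrix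
open scoped ComplexOrder

/-- The trace norm `‖A‖₁ = tr √(AᴴA)` of a complex square matrix. -/
noncomputable def traceNorm {n : ℕ} (A : Matrix (Fin n) (Fin n) ℂ) : ℝ :=
  (((Matrix.posSemidef_conjTranspose_mul_self A).1.eigenvectorUnitary.1 *
    diagonal (((↑) : ℝ → ℂ) ∘ Real.sqrt ∘ (Matrix.posSemidef_conjTranspose_mul_self A).1.eigenvalues) *
    (star (Matrix.posSemidef_conjTranspose_mul_self A).1.eigenvectorUnitary :
      Matrix (Fin n) (Fin n) ℂ)).trace).re

open scoped MatrixOrder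

namespace Matrix

variable {m : Type*} [Fintype m]

lemma PosSemidef.trace_eq_re {M : Matrix m m ℂ} (hM : M.PosSemidef) : M.trace = M.trace.re :=
  Complex.eq_re_of_ofReal_le (r := 0) (by rw [Complex.ofReal_zero]; exact hM.trace_nonneg)

lemma trace_mul_nonneg_of_isStarProjection {E X : Matrix m m ℂ} (hE : IsStarProjection E)
    (hX : X.PosSemidef) : 0 ≤ (E * X).trace := by
  have hEh : Eᴴ = E := hE.isSelfAdjoint
  have := (hX.conjTranspose_mul_mul_same E).trace_nonneg
  rwa [hEh, trace_mul_cycle, hE.isIdempotentElem.eq] at this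

lemma exists_posSemidef_trace_eq_one_smul_eq {σ M : Matrix m m ℂ} (hσ : σ.PosSemidef)
    (hσ₁ : σ.trace = 1) (hM : M.PosSemidef) {a c : ℝ} (hMa : M.trace = a) (hc : 0 ≤ c) :
    ∃ ρ : Matrix m m ℂ, ρ.PosSemidef ∧ ρ.trace = 1 ∧ ((a + c : ℝ) : ℂ) • ρ = M + (c : ℂ) • σ := by
  have ha : 0 ≤ a := Complex.zero_le_real.mp (hMa ▸ hM.trace_nonneg)
  by_cases hac : a + c = 0
  · obtain ⟨rfl, rfl⟩ : a = 0 ∧ c = 0 := ⟨by linarith, by linarith⟩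
    have hM0 : M = 0 := hM.trace_eq_zero_iff.mp (by simpa using hMa)
    exact ⟨σ, hσ, hσ₁, by simp [hM0]⟩
  have hac' : ((a + c : ℝ) : ℂ) ≠ 0 := Complex.ofReal_ne_zero.mpr hac
  refine ⟨((a + c : ℝ) : ℂ)⁻¹ • (M + (c : ℂ) • σ), ?_, ?_, ?_⟩
  · exact (hM.add (hσ.smul (Complex.zero_le_real.mpr hc))).smul
      (inv_nonneg.mpr (Complex.zero_le_real.mpr (by linarith)))
  · rw [trace_smul, trace_add, trace_smul, hMa, hσ₁, smul_eq_mul, smul_eq_mul, mul_one,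
      ← Complex.ofReal_add, inv_mul_cancel₀ hac']
  · rw [smul_smul, mul_inv_cancel₀ hac', one_smul]

variable [DecidableEq m]

lemma cfc_mul_cfc (f g : ℝ → ℝ) (A : Matrix m m ℂ) :
    cfc f A * cfc g A = cfc (fun x => f x * g x) A :=
  (cfc_mul f g A (A.finite_real_spectrum.continuousOn _)
    (A.finite_real_spectrum.continuousOn _)).symm

noncomputable def nonnegSpectralProj (A : Matrix m m ℂ) : Matrix m m ℂ :=
  cfc (fun x : ℝ => if 0 ≤ x then (1 : ℝ) else 0) A

variable {A : Matrix m m ℂ}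

lemma isStarProjection_nonnegSpectralProj (hA : A.IsHermitian) :
    IsStarProjection A.nonnegSpectralProj := by
  have hA' : IsSelfAdjoint A := hA
  refine ⟨?_, cfc_predicate _ _⟩
  rw [IsIdempotentElem, nonnegSpectralProj, cfc_mul_cfc]
  exact cfc_congr fun x _ => by split_ifs <;> simp

lemma nonnegSpectralProj_mul_self (hA : A.IsHermitian) :
    A.nonnegSpectralProj * A = cfc (fun x : ℝ => max x 0) A := by
  have hA' : IsSelfAdjoint A := hA
  calc A.nonnegSpectralProj * A = A.nonnegSpectralProj * cfc id A := by rw [cfc_id ℝ A]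
    _ = _ := by
      rw [nonnegSpectralProj, cfc_mul_cfc]
      refine cfc_congr fun x _ => ?_
      split_ifs with h
      · simp [h]
      · simp [(not_le.mp h).le]

lemma one_sub_nonnegSpectralProj_mul_neg_self (hA : A.IsHermitian) :
    (1 - A.nonnegSpectralProj) * -A = cfc (fun x : ℝ => max (-x) 0) A := by
  have hA' : IsSelfAdjoint A := hA
  calc (1 - A.nonnegSpectralProj) * -A = cfc (fun x : ℝ => max x 0) A - cfc id A := by
        rw [cfc_id ℝ A, ← nonnegSpectralProj_mul_self hA]; noncomm_ring
    _ = _ := by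
      rw [← cfc_sub ..]
      exact cfc_congr fun x _ => by simp only [id]; rcases le_total x 0 with h | h <;> simp [h]

lemma posSemidef_nonnegSpectralProj_mul_self (hA : A.IsHermitian) :
    (A.nonnegSpectralProj * A).PosSemidef := by
  rw [nonnegSpectralProj_mul_self hA]
  exact (cfc_nonneg fun x _ => le_max_right x 0).posSemidef

lemma posSemidef_one_sub_nonnegSpectralProj_mul_neg_self (hA : A.IsHermitian) :
    ((1 - A.nonnegSpectralProj) * -A).PosSemidef := by
  rw [one_sub_nonnegSpectralProj_mul_neg_self hA]
  exact (cfc_nonneg fun x _ => le_max_right (-x) 0).posSemidef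

lemma cfc_abs_eq (hA : A.IsHermitian) :
    cfc (fun x : ℝ => |x|) A = A.nonnegSpectralProj * A + (1 - A.nonnegSpectralProj) * -A := by
  have hA' : IsSelfAdjoint A := hA
  rw [nonnegSpectralProj_mul_self hA, one_sub_nonnegSpectralProj_mul_neg_self hA, ← cfc_add ..]
  exact cfc_congr fun x _ => (max_zero_add_max_neg_zero_eq_abs_self x).symm

lemma exists_posSemidef_trace_eq_one [Nonempty m] :
    ∃ σ : Matrix m m ℂ, σ.PosSemidef ∧ σ.trace = 1 := by
  let i : m := Classical.arbitrary m
  refine ⟨diagonal (Pi.single i 1), PosSemidef.diagonal (Pi.single_nonneg.mpr zero_le_one), ?_⟩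
  simp [trace_diagonal]

noncomputable def measurePrepareMap (E ρ₁ ρ₂ : Matrix m m ℂ) : Matrix m m ℂ →ₗ[ℂ] Matrix m m ℂ :=
  (traceLinearMap m ℂ ℂ ∘ₗ LinearMap.mulLeft ℂ E).smulRight ρ₁ +
    (traceLinearMap m ℂ ℂ ∘ₗ LinearMap.mulLeft ℂ (1 - E)).smulRight ρ₂

variable {E ρ₁ ρ₂ : Matrix m m ℂ}

lemma measurePrepareMap_apply (X : Matrix m m ℂ) :
    measurePrepareMap E ρ₁ ρ₂ X = (E * X).trace • ρ₁ + ((1 - E) * X).trace • ρ₂ := rfl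

lemma posSemidef_measurePrepareMap (hE : IsStarProjection E) (hρ₁ : ρ₁.PosSemidef)
    (hρ₂ : ρ₂.PosSemidef) {X : Matrix m m ℂ} (hX : X.PosSemidef) :
    (measurePrepareMap E ρ₁ ρ₂ X).PosSemidef :=
  (hρ₁.smul (trace_mul_nonneg_of_isStarProjection hE hX)).add
    (hρ₂.smul (trace_mul_nonneg_of_isStarProjection hE.one_sub hX))

lemma trace_measurePrepareMap (hρ₁ : ρ₁.trace = 1) (hρ₂ : ρ₂.trace = 1) (X : Matrix m m ℂ) :
    (measurePrepareMap E ρ₁ ρ₂ X).trace = X.trace := by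
  rw [measurePrepareMap_apply, trace_add, trace_smul, trace_smul, hρ₁, hρ₂, smul_eq_mul,
    smul_eq_mul, mul_one, mul_one, ← trace_add, ← add_mul, add_sub_cancel, one_mul]

end Matrix

lemma traceNorm_eq_re_trace_cfc_sqrt {n : ℕ} (A : Matrix (Fin n) (Fin n) ℂ) :
    traceNorm A = (cfc Real.sqrt (Aᴴ * A)).trace.re := by
  rw [(posSemidef_conjTranspose_mul_self A).1.cfc_eq]; rfl

lemma traceNorm_eq_re_trace_cfc_abs {n : ℕ} {A : Matrix (Fin n) (Fin n) ℂ} (hA : A.IsHermitian) :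
    traceNorm A = (cfc (fun x : ℝ => |x|) A).trace.re := by
  have hA' : IsSelfAdjoint A := hA
  have hsq : A * A = cfc (fun x : ℝ => x * x) A := by rw [← cfc_mul_cfc, cfc_id' ℝ A]
  rw [traceNorm_eq_re_trace_cfc_sqrt, hA.eq, hsq, ← cfc_comp' ..]
  exact congrArg (fun M : Matrix (Fin n) (Fin n) ℂ => M.trace.re)
    (cfc_congr fun x _ => Real.sqrt_mul_self_eq_abs x)

section TraceNorm

variable {n : ℕ} {A B P Q : Matrix (Fin n) (Fin n) ℂ}

lemma traceNorm_eq_re_trace_add (hA : A.IsHermitian) :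
    traceNorm A = (A.nonnegSpectralProj * A).trace.re +
      ((1 - A.nonnegSpectralProj) * -A).trace.re := by
  rw [traceNorm_eq_re_trace_cfc_abs hA, cfc_abs_eq hA, trace_add, Complex.add_re]

lemma exists_posSemidef_sub_eq_traceNorm (hA : A.IsHermitian) :
    ∃ P Q : Matrix (Fin n) (Fin n) ℂ, P.PosSemidef ∧ Q.PosSemidef ∧ A = P - Q ∧
      traceNorm A = P.trace.re + Q.trace.re :=
  ⟨_, _, posSemidef_nonnegSpectralProj_mul_self hA,
    posSemidef_one_sub_nonnegSpectralProj_mul_neg_self hA, by noncomm_ring,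
    traceNorm_eq_re_trace_add hA⟩

lemma traceNorm_sub_le (hP : P.PosSemidef) (hQ : Q.PosSemidef) :
    traceNorm (P - Q) ≤ P.trace.re + Q.trace.re := by
  have hPQ := hP.1.sub hQ.1
  set E := (P - Q).nonnegSpectralProj
  have hE : IsStarProjection E := isStarProjection_nonnegSpectralProj hPQ
  have hEQ := (Complex.nonneg_iff.mp (trace_mul_nonneg_of_isStarProjection hE hQ)).1
  have hEP := (Complex.nonneg_iff.mp (trace_mul_nonneg_of_isStarProjection hE.one_sub hP)).1
  rw [traceNorm_eq_re_trace_add hPQ]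
  simp only [sub_mul, mul_sub, mul_neg, one_mul, trace_sub, trace_neg, Complex.sub_re,
    Complex.neg_re] at hEP ⊢
  linarith

lemma traceNorm_map_le (T : Matrix (Fin n) (Fin n) ℂ →ₗ[ℂ] Matrix (Fin n) (Fin n) ℂ)
    (hT : ∀ X, X.PosSemidef → (T X).PosSemidef) (hTtr : ∀ X, (T X).trace = X.trace)
    (hB : B.IsHermitian) : traceNorm (T B) ≤ traceNorm B := by
  obtain ⟨P, Q, hP, hQ, rfl, hPQ⟩ := exists_posSemidef_sub_eq_traceNorm hB
  calc traceNorm (T (P - Q)) = traceNorm (T P - T Q) := by rw [map_sub]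
    _ ≤ (T P).trace.re + (T Q).trace.re := traceNorm_sub_le (hT P hP) (hT Q hQ)
    _ = traceNorm (P - Q) := by rw [hTtr, hTtr, hPQ]

lemma exists_ptp_map_apply_eq_sub (hB : B.IsHermitian) (hP : P.PosSemidef) (hQ : Q.PosSemidef)
    (htr : (P - Q).trace = B.trace) (hnorm : P.trace.re + Q.trace.re ≤ traceNorm B) :
    ∃ T : Matrix (Fin n) (Fin n) ℂ →ₗ[ℂ] Matrix (Fin n) (Fin n) ℂ,
      (∀ X, X.PosSemidef → (T X).PosSemidef) ∧ (∀ X, (T X).trace = X.trace) ∧ T B = P - Q := by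
  rcases isEmpty_or_nonempty (Fin n) with _ | _
  · exact ⟨LinearMap.id, fun _ h => h, fun _ => rfl, Subsingleton.elim _ _⟩
  obtain ⟨σ, hσ, hσ₁⟩ := exists_posSemidef_trace_eq_one (m := Fin n)
  set E := B.nonnegSpectralProj
  have hBpos : (E * B).PosSemidef := posSemidef_nonnegSpectralProj_mul_self hB
  have hBneg : ((1 - E) * -B).PosSemidef := posSemidef_one_sub_nonnegSpectralProj_mul_neg_self hB
  set c := (E * B).trace.re - P.trace.re
  have hBneg_tr : ((1 - E) * -B).trace.re = Q.trace.re + c := by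
    have := congrArg Complex.re htr
    simp only [mul_neg, sub_mul, one_mul, trace_neg, trace_sub, Complex.neg_re,
      Complex.sub_re] at this ⊢
    linarith
  have hc : 0 ≤ c := by
    rw [traceNorm_eq_re_trace_add hB] at hnorm
    linarith
  obtain ⟨ρ₁, hρ₁, hρ₁tr, hρ₁P⟩ :=
    exists_posSemidef_trace_eq_one_smul_eq hσ hσ₁ hP hP.trace_eq_re hc
  obtain ⟨ρ₂, hρ₂, hρ₂tr, hρ₂Q⟩ :=
    exists_posSemidef_trace_eq_one_smul_eq hσ hσ₁ hQ hQ.trace_eq_re hc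
  refine ⟨measurePrepareMap E ρ₁ ρ₂,
    fun X => posSemidef_measurePrepareMap (isStarProjection_nonnegSpectralProj hB) hρ₁ hρ₂,
    trace_measurePrepareMap hρ₁tr hρ₂tr, ?_⟩
  have hpos : (E * B).trace = ((P.trace.re + c : ℝ) : ℂ) := by
    rw [hBpos.trace_eq_re, add_sub_cancel]
  have hneg : ((1 - E) * B).trace = -((Q.trace.re + c : ℝ) : ℂ) := by
    rw [← hBneg_tr, ← hBneg.trace_eq_re, mul_neg, trace_neg, neg_neg]
  rw [measurePrepareMap_apply, hpos, hneg, neg_smul, hρ₁P, hρ₂Q]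
  abel

end TraceNorm

/-- For Hermitian `A, B`, there is a positive trace-preserving linear map sending `B` to `A`
iff `tr A = tr B` and `‖A‖₁ ≤ ‖B‖₁`. -/
theorem exists_ptp_map_iff
    {n : ℕ} (A B : Matrix (Fin n) (Fin n) ℂ) (hA : A.IsHermitian) (hB : B.IsHermitian) :
    (∃ T : Matrix (Fin n) (Fin n) ℂ →ₗ[ℂ] Matrix (Fin n) (Fin n) ℂ,
        (∀ X : Matrix (Fin n) (Fin n) ℂ, X.PosSemidef → (T X).PosSemidef) ∧
        (∀ X : Matrix (Fin n) (Fin n) ℂ, (T X).trace = X.trace) ∧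
        T B = A) ↔
      A.trace = B.trace ∧ traceNorm A ≤ traceNorm B := by
  constructor
  · rintro ⟨T, hT, hTtr, rfl⟩
    exact ⟨hTtr B, traceNorm_map_le T hT hTtr hB⟩
  · rintro ⟨htr, hnorm⟩
    obtain ⟨P, Q, hP, hQ, rfl, hPQ⟩ := exists_posSemidef_sub_eq_traceNorm hA
    exact exists_ptp_map_apply_eq_sub hB hP hQ htr (hPQ ▸ hnorm)
end

section
/- Let x, y ∈ ℝⁿ. There exists a column-stochastic matrix M ∈ ℝ^{n×n} with My = x if and only if Σⱼ xⱼ = Σⱼ yⱼ and ‖x‖₁ ≤ ‖y‖₁. -/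
open Matrix

/-!
The forward direction holds because a column-stochastic matrix preserves the sum of a vector
and, applied to `|y|`, dominates `|M y|` entrywise. Conversely, write `p` and `q` for the sums
of the positive and negative parts of `y`. The hypotheses say `∑ x = p - q` and `‖x‖₁ ≤ p + q`,
so `x = u - v` with `u, v ≥ 0`, `∑ u = p`, `∑ v = q` (add the slack `(p + q - ‖x‖₁) / 2` to both
parts of `x` at one coordinate). With probability vectors `w₁, w₂` such that `p • w₁ = u` and
`q • w₂ = v`, the matrix whose `j`-th column is `w₁` if `0 ≤ y j` and `w₂` otherwise maps `y`
to `p • w₁ - q • w₂ = x`.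
-/

section

variable {ι κ : Type*} [Fintype ι]

lemma sum_posPart_sub_sum_negPart (x : ι → ℝ) : ∑ i, (x i)⁺ - ∑ i, (x i)⁻ = ∑ i, x i := by
  simp only [← Finset.sum_sub_distrib, posPart_sub_negPart]

lemma sum_posPart_add_sum_negPart (x : ι → ℝ) : ∑ i, (x i)⁺ + ∑ i, (x i)⁻ = ∑ i, |x i| := by
  simp only [← Finset.sum_add_distrib, posPart_add_negPart]

lemma abs_mulVec_le_mulVec_abs (M : Matrix κ ι ℝ) (hM : ∀ i j, 0 ≤ M i j)
    (y : ι → ℝ) (i : κ) : |(M *ᵥ y) i| ≤ (M *ᵥ fun j => |y j|) i := by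
  simp only [mulVec, dotProduct]
  refine (Finset.abs_sum_le_sum_abs _ _).trans_eq (Finset.sum_congr rfl fun j _ => ?_)
  rw [abs_mul, abs_of_nonneg (hM i j)]

lemma sum_abs_mulVec_le_of_mem_colStochastic [DecidableEq ι] {M : Matrix ι ι ℝ}
    (hM : M ∈ colStochastic ℝ ι) (y : ι → ℝ) : ∑ i, |(M *ᵥ y) i| ≤ ∑ i, |y i| :=
  calc ∑ i, |(M *ᵥ y) i| ≤ ∑ i, (M *ᵥ fun j => |y j|) i :=
        Finset.sum_le_sum fun i _ => abs_mulVec_le_mulVec_abs M hM.1 y i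
    _ = ∑ i, |y i| := sum_mulVec_of_mem_colStochastic hM

lemma exists_nonneg_sub_eq_of_sum_abs_le [Nonempty ι] {x : ι → ℝ} {p q : ℝ}
    (hsum : ∑ i, x i = p - q) (habs : ∑ i, |x i| ≤ p + q) :
    ∃ u v : ι → ℝ, 0 ≤ u ∧ 0 ≤ v ∧ ∑ i, u i = p ∧ ∑ i, v i = q ∧ u - v = x := by
  classical
  obtain ⟨i₀⟩ := ‹Nonempty ι›
  set slack : ι → ℝ := Pi.single i₀ ((p + q - ∑ i, |x i|) / 2)
  have hslack : 0 ≤ slack := Pi.single_nonneg.2 (by linarith)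
  have hslack_sum : ∑ i, slack i = (p + q - ∑ i, |x i|) / 2 := Fintype.sum_pi_single' _ _
  refine ⟨x⁺ + slack, x⁻ + slack, add_nonneg (posPart_nonneg x) hslack,
    add_nonneg (negPart_nonneg x) hslack, ?_, ?_, ?_⟩
  · simp only [Pi.add_apply, Pi.posPart_apply, Finset.sum_add_distrib, hslack_sum]
    linarith [sum_posPart_sub_sum_negPart x, sum_posPart_add_sum_negPart x]
  · simp only [Pi.add_apply, Pi.negPart_apply, Finset.sum_add_distrib, hslack_sum]
    linarith [sum_posPart_sub_sum_negPart x, sum_posPart_add_sum_negPart x]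
  · rw [add_sub_add_right_eq_sub, posPart_sub_negPart]

lemma exists_nonneg_sum_eq_one_smul_eq [Nonempty ι] {u : ι → ℝ} (hu : 0 ≤ u) :
    ∃ w : ι → ℝ, 0 ≤ w ∧ ∑ i, w i = 1 ∧ (∑ i, u i) • w = u := by
  classical
  by_cases h : ∑ i, u i = 0
  · obtain ⟨i₀⟩ := ‹Nonempty ι›
    have hu0 : u = 0 := funext fun i =>
      (Finset.sum_eq_zero_iff_of_nonneg fun j _ => hu j).1 h i (Finset.mem_univ i)
    exact ⟨Pi.single i₀ 1, Pi.single_nonneg.2 zero_le_one, Fintype.sum_pi_single' _ _,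
      by rw [h, zero_smul, hu0]⟩
  · refine ⟨(∑ i, u i)⁻¹ • u, smul_nonneg (inv_nonneg.2 (Finset.sum_nonneg fun i _ => hu i)) hu,
      ?_, by rw [smul_smul, mul_inv_cancel₀ h, one_smul]⟩
    simp only [Pi.smul_apply, smul_eq_mul, ← Finset.mul_sum, inv_mul_cancel₀ h]

noncomputable def signColumns (y : ι → ℝ) (w₁ w₂ : κ → ℝ) : Matrix κ ι ℝ :=
  of fun i j => if 0 ≤ y j then w₁ i else w₂ i

lemma signColumns_mulVec (y : ι → ℝ) (w₁ w₂ : κ → ℝ) :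
    signColumns y w₁ w₂ *ᵥ y = (∑ j, (y j)⁺) • w₁ - (∑ j, (y j)⁻) • w₂ := by
  funext i
  have hcol : ∀ j, (if 0 ≤ y j then w₁ i else w₂ i) * y j = (y j)⁺ * w₁ i - (y j)⁻ * w₂ i := by
    intro j
    rcases le_or_gt 0 (y j) with hy | hy
    · rw [if_pos hy, posPart_eq_self.2 hy, negPart_eq_zero.2 hy]; ring
    · rw [if_neg hy.not_ge, posPart_eq_zero.2 hy.le, negPart_eq_neg.2 hy.le]; ring
  simp only [mulVec, dotProduct, signColumns, of_apply, hcol, Finset.sum_sub_distrib,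
    Pi.sub_apply, Pi.smul_apply, smul_eq_mul, Finset.sum_mul]

lemma signColumns_mem_colStochastic [DecidableEq ι] (y : ι → ℝ) {w₁ w₂ : ι → ℝ}
    (hw₁ : 0 ≤ w₁) (hw₁_sum : ∑ i, w₁ i = 1) (hw₂ : 0 ≤ w₂) (hw₂_sum : ∑ i, w₂ i = 1) :
    signColumns y w₁ w₂ ∈ colStochastic ℝ ι := by
  refine mem_colStochastic_iff_sum.2 ⟨fun i j => ?_, fun j => ?_⟩ <;>
    simp only [signColumns, of_apply] <;> split_ifs
  exacts [hw₁ i, hw₂ i, hw₁_sum, hw₂_sum]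

theorem exists_mem_colStochastic_mulVec_eq [DecidableEq ι] [Nonempty ι] {x y : ι → ℝ}
    (hsum : ∑ i, x i = ∑ i, y i) (habs : ∑ i, |x i| ≤ ∑ i, |y i|) :
    ∃ M ∈ colStochastic ℝ ι, M *ᵥ y = x := by
  obtain ⟨u, v, hu, hv, hu_sum, hv_sum, rfl⟩ :=
    exists_nonneg_sub_eq_of_sum_abs_le (p := ∑ j, (y j)⁺) (q := ∑ j, (y j)⁻)
      (by rw [hsum, sum_posPart_sub_sum_negPart]) (by rwa [sum_posPart_add_sum_negPart])
  obtain ⟨w₁, hw₁, hw₁_sum, hw₁u⟩ := exists_nonneg_sum_eq_one_smul_eq hu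
  obtain ⟨w₂, hw₂, hw₂_sum, hw₂v⟩ := exists_nonneg_sum_eq_one_smul_eq hv
  refine ⟨signColumns y w₁ w₂, signColumns_mem_colStochastic y hw₁ hw₁_sum hw₂ hw₂_sum, ?_⟩
  rw [signColumns_mulVec, ← hu_sum, ← hv_sum, hw₁u, hw₂v]

end

/-- There exists a column-stochastic matrix `M` with `M y = x` iff `x` and `y` have the same
total sum and `‖x‖₁ ≤ ‖y‖₁`. -/
theorem exists_column_stochastic_iff
    {n : ℕ} (x y : Fin n → ℝ) :
    (∃ M : Matrix (Fin n) (Fin n) ℝ,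
        (∀ i j, 0 ≤ M i j) ∧ (∀ j, ∑ i, M i j = 1) ∧ M.mulVec y = x) ↔
      (∑ j, x j = ∑ j, y j ∧ ∑ j, |x j| ≤ ∑ j, |y j|) := by
  simp only [← and_assoc, ← mem_colStochastic_iff_sum]
  constructor
  · rintro ⟨M, hM, rfl⟩
    exact ⟨sum_mulVec_of_mem_colStochastic hM, sum_abs_mulVec_le_of_mem_colStochastic hM y⟩
  · rintro ⟨hsum, habs⟩
    cases isEmpty_or_nonempty (Fin n)
    · exact ⟨1, one_mem _, Subsingleton.elim _ _⟩
    · exact exists_mem_colStochastic_mulVec_eq hsum habs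
end

section
/- Let d ∈ ℝⁿ have strictly positive entries, D = diag(d), ρ a density matrix, and j ∈ {1,…,n}. Then there exists a quantum channel T with T(D) = D and T(|eⱼ⟩⟨eⱼ|) = ρ if and only if D − dⱼρ is positive semidefinite. -/
/-! A channel is positive, and by linearity it sends the positive semidefinite diagonal matrix
`D - dⱼ|eⱼ⟩⟨eⱼ|` to `D - dⱼρ`. Conversely, if `S := D - dⱼρ` is positive semidefinite, then
`tr S = ∑_{i ≠ j} dᵢ`, and the measure-and-prepare channel `A ↦ Aⱼⱼ ρ + (∑_{i ≠ j} Aᵢᵢ) S / tr S`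
fixes `D` and sends `|eⱼ⟩⟨eⱼ|` to `ρ`. Its block form is a sum of Kronecker products of positive
semidefinite matrices, which gives complete positivity. -/

open Matrix
open scoped ComplexOrder Kronecker

def IsQuantumChannel {n : ℕ}
    (T : Matrix (Fin n) (Fin n) ℂ →ₗ[ℂ] Matrix (Fin n) (Fin n) ℂ) : Prop :=
  (∀ (m : ℕ) (A : Matrix (Fin n × Fin m) (Fin n × Fin m) ℂ),
      A.PosSemidef → (tensorId T m A).PosSemidef) ∧
  (∀ A : Matrix (Fin n) (Fin n) ℂ, (T A).trace = A.trace)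

def IsDensityMatrix {κ : Type*} [Fintype κ] (ρ : Matrix κ κ ℂ) : Prop :=
  ρ.PosSemidef ∧ ρ.trace = 1

namespace Matrix

variable {ι R : Type*}

theorem posSemidef_diagonal_sub_smul_single_self [DecidableEq ι] [CommRing R] [PartialOrder R]
    [StarRing R] [StarOrderedRing R] {d : ι → R} (hd : 0 ≤ d) (j : ι) :
    (diagonal d - d j • single j j 1).PosSemidef := by
  rw [← diagonal_single, ← diagonal_smul, diagonal_sub]
  refine PosSemidef.diagonal fun i => ?_
  rcases eq_or_ne i j with rfl | hij
  · simp
  · simpa [hij] using hd i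

theorem trace_diagonal_sub_smul [Fintype ι] [DecidableEq ι] [CommRing R] (d : ι → R) (j : ι)
    {ρ : Matrix ι ι R} (hρ : ρ.trace = 1) :
    (diagonal d - d j • ρ).trace = ∑ i ∈ Finset.univ.erase j, d i := by
  simp [trace_sub, hρ, Finset.sum_erase_eq_sub]

theorem PosSemidef.trace_smul_inv_trace_smul [Fintype ι] {S : Matrix ι ι ℂ} (hS : S.PosSemidef) :
    S.trace • S.trace⁻¹ • S = S := by
  rcases eq_or_ne S.trace 0 with h | h
  · simp [hS.trace_eq_zero_iff.1 h]
  · rw [smul_smul, mul_inv_cancel₀ h, one_smul]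

theorem PosSemidef.isDensityMatrix_inv_trace_smul [Fintype ι] {S : Matrix ι ι ℂ} (hS : S.PosSemidef)
    (h : S.trace ≠ 0) : IsDensityMatrix (S.trace⁻¹ • S) :=
  ⟨hS.smul (inv_nonneg.2 hS.trace_nonneg), by rw [trace_smul, smul_eq_mul, inv_mul_cancel₀ h]⟩

end Matrix

theorem tensorId_one_submatrix {n k : ℕ}
    (T : Matrix (Fin n) (Fin n) ℂ →ₗ[ℂ] Matrix (Fin k) (Fin k) ℂ) (A : Matrix (Fin n) (Fin n) ℂ) :
    (tensorId T 1 (A.submatrix Prod.fst Prod.fst)).submatrix (·, 0) (·, 0) = T A :=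
  rfl

theorem IsQuantumChannel.posSemidef_apply {n : ℕ}
    {T : Matrix (Fin n) (Fin n) ℂ →ₗ[ℂ] Matrix (Fin n) (Fin n) ℂ} (hT : IsQuantumChannel T)
    {A : Matrix (Fin n) (Fin n) ℂ} (hA : A.PosSemidef) : (T A).PosSemidef :=
  tensorId_one_submatrix T A ▸ (hT.1 1 _ (hA.submatrix Prod.fst)).submatrix _

section MeasurePrepare

variable {ι κ R : Type*} [Fintype ι] [CommSemiring R]

noncomputable def measurePrepare (σ : ι → Matrix κ κ R) : Matrix ι ι R →ₗ[R] Matrix κ κ R :=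
  Fintype.linearCombination R σ ∘ₗ diagLinearMap ι R R

theorem measurePrepare_apply (σ : ι → Matrix κ κ R) (A : Matrix ι ι R) :
    measurePrepare σ A = ∑ i, A i i • σ i :=
  rfl

theorem measurePrepare_single [DecidableEq ι] (σ : ι → Matrix κ κ R) (j : ι) :
    measurePrepare σ (single j j 1) = σ j := by
  simp [measurePrepare_apply, single_apply]

theorem measurePrepare_update_diagonal [DecidableEq ι] (τ ρ : Matrix κ κ R) (j : ι) (d : ι → R) :
    measurePrepare (Function.update (fun _ => τ) j ρ) (diagonal d) =
      d j • ρ + (∑ i ∈ Finset.univ.erase j, d i) • τ := by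
  rw [measurePrepare_apply, ← Finset.add_sum_erase _ _ (Finset.mem_univ j), Finset.sum_smul]
  congr 1
  · simp
  · refine Finset.sum_congr rfl fun i hi => ?_
    simp [Finset.ne_of_mem_erase hi]

theorem trace_measurePrepare [Fintype κ] {σ : ι → Matrix κ κ R} (hσ : ∀ i, (σ i).trace = 1)
    (A : Matrix ι ι R) : (measurePrepare σ A).trace = A.trace := by
  simp only [measurePrepare_apply, trace_sum, trace_smul, hσ, smul_eq_mul, mul_one]
  rfl

end MeasurePrepare

theorem tensorId_measurePrepare {n k m : ℕ} (σ : Fin n → Matrix (Fin k) (Fin k) ℂ)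
    (A : Matrix (Fin n × Fin m) (Fin n × Fin m) ℂ) :
    tensorId (measurePrepare σ) m A = ∑ i, σ i ⊗ₖ A.submatrix (i, ·) (i, ·) := by
  ext ⟨p₁, p₂⟩ ⟨q₁, q₂⟩
  simp [tensorId, measurePrepare_apply, Matrix.sum_apply, mul_comm]

theorem isQuantumChannel_measurePrepare {n : ℕ} {σ : Fin n → Matrix (Fin n) (Fin n) ℂ}
    (hσ : ∀ i, IsDensityMatrix (σ i)) : IsQuantumChannel (measurePrepare σ) := by
  refine ⟨fun m A hA => ?_, trace_measurePrepare fun i => (hσ i).2⟩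
  rw [tensorId_measurePrepare]
  exact posSemidef_sum _ fun i _ => (hσ i).1.kronecker (hA.submatrix _)

/-- `ρ ≺_D |eⱼ⟩⟨eⱼ|` (existence of a channel fixing `D = diag d` sending `|eⱼ⟩⟨eⱼ|` to `ρ`)
holds iff `D - dⱼ ρ` is positive semidefinite. -/
theorem d_majorized_by_pure_state_iff
    {n : ℕ} (d : Fin n → ℝ) (hd : ∀ i, 0 < d i)
    (ρ : Matrix (Fin n) (Fin n) ℂ) (hρ : ρ.PosSemidef) (hρtr : ρ.trace = 1)
    (j : Fin n) :
    (∃ T : Matrix (Fin n) (Fin n) ℂ →ₗ[ℂ] Matrix (Fin n) (Fin n) ℂ,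
        IsQuantumChannel T ∧
        T (Matrix.diagonal fun i => (d i : ℂ)) = (Matrix.diagonal fun i => (d i : ℂ)) ∧
        T (Matrix.single j j 1) = ρ) ↔
      ((Matrix.diagonal fun i => (d i : ℂ)) - (d j : ℂ) • ρ).PosSemidef := by
  have hd' : ∀ i, 0 < (d i : ℂ) := fun i => Complex.zero_lt_real.2 (hd i)
  constructor
  · rintro ⟨T, hT, hTD, hTE⟩
    have hTS := hT.posSemidef_apply (posSemidef_diagonal_sub_smul_single_self (fun i => (hd' i).le) j)
    rwa [map_sub, map_smul, hTD, hTE] at hTS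
  · intro hS
    set S := (diagonal fun i => (d i : ℂ)) - (d j : ℂ) • ρ
    have htrS : S.trace = ∑ i ∈ Finset.univ.erase j, (d i : ℂ) := trace_diagonal_sub_smul _ j hρtr
    refine ⟨measurePrepare (Function.update (fun _ => S.trace⁻¹ • S) j ρ), ?_, ?_, by
      rw [measurePrepare_single, Function.update_self]⟩
    · refine isQuantumChannel_measurePrepare (Function.forall_update_iff _ _ |>.2 ⟨⟨hρ, hρtr⟩, ?_⟩)
      intro i hij
      refine hS.isDensityMatrix_inv_trace_smul (htrS ▸ (Finset.sum_pos (fun i _ => hd' i) ?_).ne')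
      exact ⟨i, Finset.mem_erase.2 ⟨hij, Finset.mem_univ i⟩⟩
    · rw [measurePrepare_update_diagonal, ← htrS, hS.trace_smul_inv_trace_smul, add_sub_cancel]
end

section
/- Let d ∈ ℝⁿ with strictly positive entries, Σⱼ dⱼ = 1, D = diag(d), and suppose the minimal entry d_k of d is attained at a unique index k. If ω is a density matrix such that some quantum channel T with T(D) = D satisfies T(ω) = |e_k⟩⟨e_k|, then ω = |e_k⟩⟨e_k|. -/
open Matrix
open scoped ComplexOrder

/-!
Work in the Heisenberg picture. The trace dual `S = T†(|e_k⟩⟨e_k|)` of the positive,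
trace-preserving map `T` satisfies `0 ≤ S ≤ 1`, and
`tr (ω (1 - S)) = tr (T ω (1 - |e_k⟩⟨e_k|)) = 0` forces `ω = S ω S`. With `ω ≤ 1` this gives
`tr (D ω) ≤ tr (D S²) ≤ tr (D S) = tr (T D |e_k⟩⟨e_k|) = d_k`. As `D - d_k` is positive
semidefinite with kernel spanned by `e_k`, this pins `ω` down to `|e_k⟩⟨e_k|`.
-/

open scoped MatrixOrder

lemma mul_self_le_self {A : Type*} [PartialOrder A] [Ring A] [TopologicalSpace A] [StarRing A]
    [Algebra ℝ A] [StarOrderedRing A] [ContinuousFunctionalCalculus ℝ A IsSelfAdjoint]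
    [NonnegSpectrumClass ℝ A] [IsSemitopologicalRing A] [T2Space A]
    {a : A} (h0 : 0 ≤ a) (h1 : a ≤ 1) : a * a ≤ a := by
  obtain ⟨s, hs, rfl⟩ := CStarAlgebra.nonneg_iff_exists_isSelfAdjoint_and_eq_mul_self.mp h0
  calc s * s * (s * s) = s * (s * s) * s := by noncomm_ring
    _ ≤ s * 1 * s := hs.conjugate_le_conjugate h1
    _ = s * s := by rw [mul_one]

namespace Matrix

section RCLike

variable {n 𝕜 : Type*} [Fintype n] [RCLike 𝕜]

lemma dotProduct_mulVec_eq_trace_vecMulVec_mul (v w : n → 𝕜) (A : Matrix n n 𝕜) :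
    v ⬝ᵥ A *ᵥ w = (vecMulVec w v * A).trace := by
  rw [vecMulVec_mul, trace_vecMulVec, dotProduct_mulVec, dotProduct_comm]

variable [DecidableEq n]

lemma PosSemidef.exists_eq_conjTranspose_mul_self {A : Matrix n n 𝕜} (hA : A.PosSemidef) :
    ∃ C : Matrix n n 𝕜, A = Cᴴ * C :=
  CStarAlgebra.nonneg_iff_eq_star_mul_self.mp hA.nonneg

lemma PosSemidef.trace_mul_nonneg {A B : Matrix n n 𝕜} (hA : A.PosSemidef) (hB : B.PosSemidef) :
    0 ≤ (A * B).trace := by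
  obtain ⟨C, rfl⟩ := hB.exists_eq_conjTranspose_mul_self
  rw [← mul_assoc, trace_mul_cycle]
  exact (hA.mul_mul_conjTranspose_same C).trace_nonneg

lemma PosSemidef.mul_eq_zero_of_trace_mul_eq_zero {A B : Matrix n n 𝕜} (hA : A.PosSemidef)
    (hB : B.PosSemidef) (h : (A * B).trace = 0) : A * B = 0 := by
  obtain ⟨C, rfl⟩ := hB.exists_eq_conjTranspose_mul_self
  obtain ⟨E, rfl⟩ := hA.exists_eq_conjTranspose_mul_self
  have hCEEC : C * (Eᴴ * E) * Cᴴ = 0 := by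
    rw [← (hA.mul_mul_conjTranspose_same C).trace_eq_zero_iff, trace_mul_cycle, trace_mul_comm, h]
  have hEC : E * Cᴴ = 0 := by
    rw [← conjTranspose_mul_self_eq_zero, conjTranspose_mul, conjTranspose_conjTranspose,
      ← hCEEC]
    noncomm_ring
  calc Eᴴ * E * (Cᴴ * C) = Eᴴ * (E * Cᴴ) * C := by noncomm_ring
    _ = 0 := by rw [hEC, mul_zero, zero_mul]

lemma PosSemidef.trace_mul_le_trace_mul {D A B : Matrix n n 𝕜} (hD : D.PosSemidef)
    (hAB : A ≤ B) : (D * A).trace ≤ (D * B).trace := by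
  have := hD.trace_mul_nonneg hAB
  rwa [mul_sub, trace_sub, sub_nonneg] at this

lemma PosSemidef.le_one_of_trace_eq_one {A : Matrix n n 𝕜} (hA : A.PosSemidef)
    (htr : A.trace = 1) : A ≤ 1 := by
  rw [CFC.le_one_iff (R := ℝ) A hA.isHermitian, hA.isHermitian.spectrum_real_eq_range_eigenvalues]
  rintro _ ⟨i, rfl⟩
  have hsum : ∑ j, hA.isHermitian.eigenvalues j = 1 := by
    have := hA.isHermitian.trace_eq_sum_eigenvalues
    rw [htr] at this
    exact_mod_cast this.symm
  rw [← hsum]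
  exact Finset.single_le_sum (fun j _ => hA.eigenvalues_nonneg j) (Finset.mem_univ i)

lemma trace_mul_le_trace_mul_of_mul_one_sub_eq_zero {D S ω : Matrix n n 𝕜}
    (hD : D.PosSemidef) (hS : S.PosSemidef) (hS1 : (1 - S).PosSemidef) (hω : ω.PosSemidef)
    (hωtr : ω.trace = 1) (hωS : ω * (1 - S) = 0) : (D * ω).trace ≤ (D * S).trace := by
  have hωS' : ω * S = ω := by rwa [mul_sub, mul_one, sub_eq_zero, eq_comm] at hωS
  have hSω : S * ω = ω := by
    simpa only [conjTranspose_mul, hS.isHermitian.eq, hω.isHermitian.eq] using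
      congrArg conjTranspose hωS'
  calc (D * ω).trace = (D * (S * ω * S)).trace := by rw [hSω, hωS']
    _ ≤ (D * (S * 1 * S)).trace :=
      hD.trace_mul_le_trace_mul <| hS.nonneg.isSelfAdjoint.conjugate_le_conjugate <|
        hω.le_one_of_trace_eq_one hωtr
    _ ≤ (D * S).trace := by
      rw [mul_one]
      exact hD.trace_mul_le_trace_mul (mul_self_le_self hS.nonneg (sub_nonneg.mp hS1.nonneg))

end RCLike

variable {m n : Type*} [DecidableEq m] [Fintype n]

noncomputable def traceDual (T : Matrix m m ℂ →ₗ[ℂ] Matrix n n ℂ) :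
    Matrix n n ℂ →ₗ[ℂ] Matrix m m ℂ where
  toFun Y := of fun p q => (T (single q p 1) * Y).trace
  map_add' Y Z := by ext; simp [mul_add]
  map_smul' c Y := by ext; simp

lemma traceDual_apply (T : Matrix m m ℂ →ₗ[ℂ] Matrix n n ℂ) (Y : Matrix n n ℂ) (p q : m) :
    traceDual T Y p q = (T (single q p 1) * Y).trace :=
  rfl

variable [Fintype m]

lemma map_conjTranspose_of_posSemidef {T : Matrix m m ℂ →ₗ[ℂ] Matrix n n ℂ}
    (hT : ∀ X, X.PosSemidef → (T X).PosSemidef) (X : Matrix m m ℂ) : T Xᴴ = (T X)ᴴ :=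
  map_star (PositiveLinearMap.mk₀ T fun X hX => (hT X hX.posSemidef).nonneg) X

lemma trace_mul_traceDual (T : Matrix m m ℂ →ₗ[ℂ] Matrix n n ℂ) (X : Matrix m m ℂ)
    (Y : Matrix n n ℂ) : (X * traceDual T Y).trace = (T X * Y).trace := by
  conv_rhs => rw [matrix_eq_sum_single X]
  have (i j : m) : single i j (X i j) = X i j • single i j 1 := by
    rw [smul_single, smul_eq_mul, mul_one]
  simp only [this, map_sum, map_smul, Finset.sum_mul, smul_mul, trace_sum, trace_smul,
    smul_eq_mul]
  simp [trace, mul_apply, traceDual_apply]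

lemma traceDual_one {T : Matrix m m ℂ →ₗ[ℂ] Matrix m m ℂ} (hT : ∀ X, (T X).trace = X.trace) :
    traceDual T 1 = 1 := by
  rw [ext_iff_trace_mul_left]
  intro X
  rw [trace_mul_traceDual, mul_one, mul_one, hT]

lemma PosSemidef.traceDual [DecidableEq n] {T : Matrix m m ℂ →ₗ[ℂ] Matrix n n ℂ}
    (hT : ∀ X, X.PosSemidef → (T X).PosSemidef) {Y : Matrix n n ℂ} (hY : Y.PosSemidef) :
    (traceDual T Y).PosSemidef := by
  refine .of_dotProduct_mulVec_nonneg ?_ fun v => ?_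
  · ext p q
    rw [conjTranspose_apply, traceDual_apply, traceDual_apply, ← trace_conjTranspose,
      conjTranspose_mul, hY.isHermitian.eq, ← map_conjTranspose_of_posSemidef hT,
      conjTranspose_single, star_one, trace_mul_comm]
  · rw [dotProduct_mulVec_eq_trace_vecMulVec_mul, trace_mul_traceDual]
    exact (hT _ (posSemidef_vecMulVec_self_star v)).trace_mul_nonneg hY

lemma eq_single_of_trace_diagonal_mul_le [DecidableEq n] {d : n → ℝ} {k : n}
    (hk : ∀ i, i ≠ k → d k < d i) {ω : Matrix n n ℂ} (hω : ω.PosSemidef) (hωtr : ω.trace = 1)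
    (h : (diagonal (fun i => (d i : ℂ)) * ω).trace ≤ d k) : ω = single k k 1 := by
  set E : Matrix n n ℂ := diagonal fun i => ((d i - d k : ℝ) : ℂ)
  have hE : E.PosSemidef := by
    refine posSemidef_diagonal_iff.mpr fun i => ?_
    rcases eq_or_ne i k with rfl | hi
    · simp
    · exact_mod_cast (sub_pos.mpr (hk i hi)).le
  have hEω : E * ω = 0 := by
    refine hE.mul_eq_zero_of_trace_mul_eq_zero hω (le_antisymm ?_ (hE.trace_mul_nonneg hω))
    have : E = diagonal (fun i => (d i : ℂ)) - (d k : ℂ) • 1 := by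
      ext i j
      by_cases hij : i = j <;> simp [E, hij]
    rwa [this, sub_mul, smul_mul, one_mul, trace_sub, trace_smul, hωtr, smul_eq_mul, mul_one,
      sub_nonpos]
  have hrow : ∀ i j, i ≠ k → ω i j = 0 := by
    intro i j hi
    have := congrFun (congrFun hEω i) j
    simpa [E, sub_eq_zero, (hk i hi).ne'] using this
  have hkk : ω k k = 1 := by
    rw [← hωtr, trace, Fintype.sum_eq_single (f := ω.diag) k fun i hi => hrow i i hi,
      diag_apply]
  ext i j
  by_cases hi : i = k
  · by_cases hj : j = k
    · subst hi hj; simpa using hkk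
    · rw [← hω.isHermitian.apply, hrow j i hj, star_zero, single_apply_of_ne]
      tauto
  · rw [hrow i j hi, single_apply_of_ne]
    tauto

end Matrix

open Matrix

lemma IsQuantumChannel.posSemidef_map {n : ℕ}
    {T : Matrix (Fin n) (Fin n) ℂ →ₗ[ℂ] Matrix (Fin n) (Fin n) ℂ} (hT : IsQuantumChannel T)
    {X : Matrix (Fin n) (Fin n) ℂ} (hX : X.PosSemidef) : (T X).PosSemidef :=
  (hT.1 1 _ (hX.submatrix Prod.fst)).submatrix fun i => (i, 0)

theorem pure_state_unique_maximal_general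
    {n : ℕ} (d : Fin n → ℝ) (hd : ∀ i, 0 < d i)
    (k : Fin n) (hk : ∀ i, i ≠ k → d k < d i)
    (ω : Matrix (Fin n) (Fin n) ℂ) (hω : ω.PosSemidef) (hωtr : ω.trace = 1)
    (T : Matrix (Fin n) (Fin n) ℂ →ₗ[ℂ] Matrix (Fin n) (Fin n) ℂ)
    (hT : IsQuantumChannel T)
    (hfix : T (Matrix.diagonal fun i => (d i : ℂ)) = (Matrix.diagonal fun i => (d i : ℂ)))
    (hmap : T ω = Matrix.single k k 1) :
    ω = Matrix.single k k 1 := by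
  set D : Matrix (Fin n) (Fin n) ℂ := diagonal fun i => (d i : ℂ)
  set P : Matrix (Fin n) (Fin n) ℂ := single k k 1
  have hP : IsStarProjection P :=
    ⟨by simp [IsIdempotentElem, P], by simp [IsSelfAdjoint, P, star_eq_conjTranspose]⟩
  have hD : D.PosSemidef := posSemidef_diagonal_iff.mpr fun i => by exact_mod_cast (hd i).le
  have hTpos : ∀ X, X.PosSemidef → (T X).PosSemidef := fun _ => hT.posSemidef_map
  have hdual_one_sub : 1 - traceDual T P = traceDual T (1 - P) := by
    rw [map_sub, traceDual_one hT.2]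
  have hS1 : (1 - traceDual T P).PosSemidef := by
    rw [hdual_one_sub]
    exact hP.one_sub.nonneg.posSemidef.traceDual hTpos
  have hωS : ω * (1 - traceDual T P) = 0 := by
    refine hω.mul_eq_zero_of_trace_mul_eq_zero hS1 ?_
    rw [hdual_one_sub, trace_mul_traceDual, hmap, mul_sub, mul_one, hP.isIdempotentElem.eq,
      sub_self, trace_zero]
  refine eq_single_of_trace_diagonal_mul_le hk hω hωtr ?_
  calc (D * ω).trace ≤ (D * traceDual T P).trace :=
        trace_mul_le_trace_mul_of_mul_one_sub_eq_zero hD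
          (hP.nonneg.posSemidef.traceDual hTpos) hS1 hω hωtr hωS
    _ = d k := by
      rw [trace_mul_traceDual, hfix, trace_mul_single]
      simp [D]

/-- If the minimal entry `d_k` of `d` is attained at a unique index `k`, then `|e_k⟩⟨e_k|`
is the unique maximal state: any density matrix `ω` with `|e_k⟩⟨e_k| ≺_D ω` (via a channel
fixing `D = diag d` sending `ω` to `|e_k⟩⟨e_k|`) equals `|e_k⟩⟨e_k|`. -/
theorem pure_state_unique_maximal
    {n : ℕ} (d : Fin n → ℝ) (hd : ∀ i, 0 < d i) (hsum : ∑ i, d i = 1)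
    (k : Fin n) (hk : ∀ i, i ≠ k → d k < d i)
    (ω : Matrix (Fin n) (Fin n) ℂ) (hω : ω.PosSemidef) (hωtr : ω.trace = 1)
    (T : Matrix (Fin n) (Fin n) ℂ →ₗ[ℂ] Matrix (Fin n) (Fin n) ℂ)
    (hT : IsQuantumChannel T)
    (hfix : T (Matrix.diagonal fun i => (d i : ℂ)) = (Matrix.diagonal fun i => (d i : ℂ)))
    (hmap : T ω = Matrix.single k k 1) :
    ω = Matrix.single k k 1 :=
  pure_state_unique_maximal_general d hd k hk ω hω hωtr T hT hfix hmap
end
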